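/- Let X be a nonempty finite type, let K ≥ 1, let π_1,…,π_K be positive reals with ∑_{j=1}^K π_j = 1, let p_1,…,p_K be probability mass functions on X, and let δ be a real number with 0 < δ ≤ 1/8. Let ξ_1,…,ξ_K : X → ℝ satisfy |ξ_j x − 1| ≤ δ for all j and all x. Set p x = ∑_{j=1}^K π_j · p_j x and h x = ∑_{j=1}^K π_j · p_j x · ξ_j x. Let q* be a probability mass function on X minimizing L(q) = ∑_{x∈X} [ p x · log(h x/(h x + q x)) + q x · log(q x/(q x + h x)) ] over all probability mass functions q on X. Then for every x, |q* x / p x − 1| ≤ 16·δ, and in particular the total variation distance satisfies (1/2)·∑_{x∈X} |q* x − p x| ≤ 8·δ. -/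

import Mathlib

/-!
Writing `L(q) = ∑ₓ jsTerm (p x) (h x) (q x)`, the loss is separable, so at an interior
minimiser on the simplex all partial derivatives `jsSlope (p x) (h x) (q* x)` coincide
(Fermat's rule along `q* + ε (eₓ - e_y)`). Since `q*` and `p` both sum to `1`, there are
points with `q* ≤ p` and with `p ≤ q*`; as `h` is within a factor `1 ± δ` of `p`, these pin the
common value between `log (1/(2+δ)) - δ/(1-δ)` and `log (1/(2-δ)) + δ`. Read back at an arbitrary
point, this traps `q*/(q*+h)` between `e^{-r}/(2+δ)` and `e^{r}/(2-δ)` with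
`r = δ + δ/(1-δ) ≤ 15δ/7`, which gives `|q* - p| ≤ 16 δ p` pointwise and hence the total
variation bound.
-/

open Finset Filter Topology

/-- The contribution to the loss `L` of a point with target mass `P`, aggregated density `H`
and generator mass `t`. -/
noncomputable def jsTerm (P H t : ℝ) : ℝ :=
  P * Real.log (H / (H + t)) + t * Real.log (t / (t + H))

noncomputable def jsSlope (P H t : ℝ) : ℝ := Real.log (t / (t + H)) + (H - P) / (t + H)

theorem hasDerivAt_jsTerm (P : ℝ) {H t : ℝ} (hH : 0 < H) (ht : 0 < t) :
    HasDerivAt (jsTerm P H) (jsSlope P H t) t := by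
  have hHt : H + t ≠ 0 := by positivity
  have htH : t + H ≠ 0 := by positivity
  have hlogH := ((hasDerivAt_const t H).fun_div ((hasDerivAt_id' t).const_add H) hHt).log
    (div_pos hH (by positivity)).ne'
  have hlogt := ((hasDerivAt_id' t).fun_div ((hasDerivAt_id' t).add_const H) htH).log
    (div_pos ht (by positivity)).ne'
  refine ((hlogH.const_mul P).add ((hasDerivAt_id' t).mul hlogt)).congr_deriv ?_
  rw [jsSlope, Real.log_div ht.ne' htH]
  field_simp
  ring

theorem abs_sum_mul_sub_sum_le {ι : Type*} (s : Finset ι) {w ξ : ι → ℝ} {δ : ℝ}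
    (hw : ∀ j ∈ s, 0 ≤ w j) (hξ : ∀ j ∈ s, |ξ j - 1| ≤ δ) :
    |∑ j ∈ s, w j * ξ j - ∑ j ∈ s, w j| ≤ δ * ∑ j ∈ s, w j := by
  rw [← sum_sub_distrib, mul_sum]
  refine (abs_sum_le_sum_abs _ _).trans (sum_le_sum fun j hj => ?_)
  rw [← mul_sub_one, abs_mul, abs_of_nonneg (hw j hj), mul_comm]
  exact mul_le_mul_of_nonneg_right (hξ j hj) (hw j hj)

theorem eq_of_isMinOn_sum_of_hasDerivAt {X : Type*} [Fintype X] [DecidableEq X]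
    {f : X → ℝ → ℝ} {f' q₀ : X → ℝ} (hq₀ : ∀ x, 0 < q₀ x)
    (hmin : IsMinOn (fun q => ∑ x, f x (q x))
      {q | (∀ x, 0 < q x) ∧ ∑ x, q x = ∑ x, q₀ x} q₀)
    (hf : ∀ x, HasDerivAt (f x) (f' x) (q₀ x)) (x y : X) : f' x = f' y := by
  set c : X → ℝ := Pi.single x 1 - Pi.single y 1
  set φ : ℝ → ℝ := fun ε => ∑ z, f z (q₀ z + ε * c z)
  have hφ : HasDerivAt φ (f' x - f' y) 0 := by
    have hterm : ∀ z ∈ univ,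
        HasDerivAt (fun ε => f z (q₀ z + ε * c z)) (f' z * (1 * c z)) 0 :=
      fun z _ => (hf z).comp_of_eq 0 (((hasDerivAt_id 0).mul_const (c z)).const_add (q₀ z))
        (by simp)
    refine (HasDerivAt.fun_sum hterm).congr_deriv ?_
    simp [c, Pi.single_apply, mul_sub, sum_sub_distrib]
  have hloc : IsLocalMin φ 0 := by
    have hpos : ∀ᶠ ε in 𝓝 (0 : ℝ), ∀ z, 0 < q₀ z + ε * c z :=
      eventually_all.2 fun z =>
        (continuousAt_const (y := (0 : ℝ))).eventually_lt
          (continuous_const.add (continuous_id.mul continuous_const)).continuousAt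
          (by simpa using hq₀ z)
    filter_upwards [hpos] with ε hε
    have hsum : ∑ z, (q₀ z + ε * c z) = ∑ z, q₀ z := by
      simp [c, sum_add_distrib, mul_sub, sum_sub_distrib, Pi.single_apply]
    simpa [φ] using isMinOn_iff.1 hmin _ ⟨hε, hsum⟩
  exact sub_eq_zero.1 (hloc.hasDerivAt_eq_zero hφ)

section Estimates

variable {δ P Q H : ℝ}

theorem sub_div_add_mem_Icc (hδ0 : 0 ≤ δ) (hδ1 : δ < 1) (hP : 0 < P) (hQ : 0 ≤ Q)
    (hH : H ∈ Set.Icc ((1 - δ) * P) ((1 + δ) * P)) :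
    (H - P) / (Q + H) ∈ Set.Icc (-(δ / (1 - δ))) δ := by
  obtain ⟨hlo, hhi⟩ := hH
  have hQH : 0 < Q + H := by nlinarith
  constructor
  · rw [← neg_div, div_le_div_iff₀ (by linarith) hQH]
    nlinarith
  · rw [div_le_iff₀ hQH]
    rcases le_or_gt H P with hHP | hPH <;> nlinarith

theorem jsSlope_le_of_le (hδ0 : 0 ≤ δ) (hδ1 : δ < 1) (hQ : 0 < Q)
    (hH : H ∈ Set.Icc ((1 - δ) * P) ((1 + δ) * P)) (hQP : Q ≤ P) :
    jsSlope P H Q ≤ Real.log (1 / (2 - δ)) + δ := by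
  have hP : 0 < P := hQ.trans_le hQP
  have hQH : 0 < Q + H := by nlinarith [hH.1]
  have hu : Real.log (Q / (Q + H)) ≤ Real.log (1 / (2 - δ)) := by
    refine Real.log_le_log (by positivity) ?_
    rw [div_le_div_iff₀ hQH (by linarith)]
    nlinarith [hH.1]
  rw [jsSlope]
  linarith [(sub_div_add_mem_Icc hδ0 hδ1 hP hQ.le hH).2]

theorem le_jsSlope_of_le (hδ0 : 0 ≤ δ) (hδ1 : δ < 1) (hP : 0 < P)
    (hH : H ∈ Set.Icc ((1 - δ) * P) ((1 + δ) * P)) (hPQ : P ≤ Q) :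
    Real.log (1 / (2 + δ)) - δ / (1 - δ) ≤ jsSlope P H Q := by
  have hQ : 0 < Q := hP.trans_le hPQ
  have hQH : 0 < Q + H := by nlinarith [hH.1]
  have hu : Real.log (1 / (2 + δ)) ≤ Real.log (Q / (Q + H)) := by
    refine Real.log_le_log (by positivity) ?_
    rw [div_le_div_iff₀ (by linarith) hQH]
    nlinarith [hH.2]
  rw [jsSlope]
  linarith [(sub_div_add_mem_Icc hδ0 hδ1 hP hQ.le hH).1]

theorem add_div_one_sub_le (hδ0 : 0 ≤ δ) (hδ : δ ≤ 1 / 8) :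
    δ + δ / (1 - δ) ≤ 15 * δ / 7 := by
  have : δ / (1 - δ) ≤ 8 * δ / 7 := by rw [div_le_iff₀ (by linarith)]; nlinarith
  linarith

theorem le_of_jsSlope_le (hδ0 : 0 ≤ δ) (hδ : δ ≤ 1 / 8) (hP : 0 < P) (hQ : 0 < Q)
    (hH : H ∈ Set.Icc ((1 - δ) * P) ((1 + δ) * P))
    (hslope : jsSlope P H Q ≤ Real.log (1 / (2 - δ)) + δ) :
    Q ≤ (1 + 16 * δ) * P := by
  have hQH : 0 < Q + H := by nlinarith [hH.1]
  set r := δ + δ / (1 - δ)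
  have hr0 : 0 ≤ r := add_nonneg hδ0 (div_nonneg hδ0 (by linarith))
  have hr : r ≤ 15 * δ / 7 := add_div_one_sub_le hδ0 hδ
  have hlog : Real.log (Q / (Q + H)) ≤ Real.log (1 / (2 - δ)) + r := by
    rw [jsSlope] at hslope
    linarith [(sub_div_add_mem_Icc hδ0 (by linarith) hP hQ.le hH).1]
  -- The cruder `exp r ≤ 1 / (1 - r)` does not reach the constant `16` at `δ = 1/8`.
  have hexp : Real.exp r ≤ 1 + r + r ^ 2 := by
    have := Real.abs_exp_sub_one_sub_id_le (x := r) (by rw [abs_of_nonneg hr0]; linarith)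
    linarith [(abs_le.1 this).2]
  set A := 1 + r + r ^ 2 with hA_def
  have hu : Q / (Q + H) ≤ A / (2 - δ) := calc
    Q / (Q + H) ≤ Real.exp (Real.log (1 / (2 - δ)) + r) :=
      (Real.log_le_iff_le_exp (div_pos hQ hQH)).1 hlog
    _ = Real.exp r / (2 - δ) := by
      rw [Real.exp_add, Real.exp_log (one_div_pos.2 (by linarith))]; ring
    _ ≤ A / (2 - δ) := by gcongr; linarith
  rw [div_le_div_iff₀ hQH (by linarith)] at hu
  have hA : A ≤ 1 + 15 * δ / 7 + (15 * δ / 7) ^ 2 := by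
    rw [hA_def]; gcongr
  have hgap : 0 < 2 - δ - A := by nlinarith
  have hA' : A * (1 + δ) ≤ (1 + 16 * δ) * (2 - δ - A) := by nlinarith
  calc Q ≤ A * (1 + δ) * P / (2 - δ - A) := by rw [le_div_iff₀ hgap]; nlinarith [hH.2]
    _ ≤ (1 + 16 * δ) * P := by rw [div_le_iff₀ hgap]; nlinarith

theorem le_of_le_jsSlope (hδ0 : 0 ≤ δ) (hδ : δ ≤ 1 / 8) (hP : 0 < P) (hQ : 0 < Q)
    (hH : H ∈ Set.Icc ((1 - δ) * P) ((1 + δ) * P))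
    (hslope : Real.log (1 / (2 + δ)) - δ / (1 - δ) ≤ jsSlope P H Q) :
    (1 - 16 * δ) * P ≤ Q := by
  have hQH : 0 < Q + H := by nlinarith [hH.1]
  set r := δ + δ / (1 - δ)
  have hr0 : 0 ≤ r := add_nonneg hδ0 (div_nonneg hδ0 (by linarith))
  have hr : r ≤ 15 * δ / 7 := add_div_one_sub_le hδ0 hδ
  have hlog : Real.log (1 / (2 + δ)) - r ≤ Real.log (Q / (Q + H)) := by
    rw [jsSlope] at hslope
    linarith [(sub_div_add_mem_Icc hδ0 (by linarith) hP hQ.le hH).2]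
  have hu : (1 - r) / (2 + δ) ≤ Q / (Q + H) := calc
    (1 - r) / (2 + δ) ≤ Real.exp (-r) / (2 + δ) := by
      gcongr; linarith [Real.add_one_le_exp (-r)]
    _ = Real.exp (Real.log (1 / (2 + δ)) - r) := by
      rw [Real.exp_sub, Real.exp_log (by positivity), Real.exp_neg]; ring
    _ ≤ Q / (Q + H) := (Real.le_log_iff_exp_le (div_pos hQ hQH)).1 hlog
  rw [div_le_div_iff₀ (by linarith) hQH] at hu
  have hB : (1 - 16 * δ) * (1 + δ + r) ≤ (1 - r) * (1 - δ) := by nlinarith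
  calc (1 - 16 * δ) * P ≤ (1 - r) * (1 - δ) * P / (1 + δ + r) := by
        rw [le_div_iff₀ (by positivity)]; nlinarith
    _ ≤ Q := by rw [div_le_iff₀ (by positivity)]; nlinarith [hH.1]

theorem abs_sub_le_of_jsSlope_mem_Icc (hδ0 : 0 ≤ δ) (hδ : δ ≤ 1 / 8) (hP : 0 < P)
    (hQ : 0 < Q)
    (hH : H ∈ Set.Icc ((1 - δ) * P) ((1 + δ) * P))
    (hslope : jsSlope P H Q ∈
      Set.Icc (Real.log (1 / (2 + δ)) - δ / (1 - δ)) (Real.log (1 / (2 - δ)) + δ)) :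
    |Q - P| ≤ 16 * δ * P :=
  abs_le.2 ⟨by linarith [le_of_le_jsSlope hδ0 hδ hP hQ hH hslope.1],
    by linarith [le_of_jsSlope_le hδ0 hδ hP hQ hH hslope.2]⟩

end Estimates

theorem stmt_11_general {X : Type*} [Fintype X]
    (K : ℕ)
    (π : Fin K → ℝ) (hπ : ∀ j, 0 < π j) (hπs : ∑ j, π j = 1)
    (p : Fin K → X → ℝ) (hp : ∀ j x, 0 < p j x) (hps : ∀ j, ∑ x, p j x = 1)
    (δ : ℝ) (hδ0 : 0 < δ) (hδ : δ ≤ 1 / 8)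
    (ξ : Fin K → X → ℝ) (hξ : ∀ j x, |ξ j x - 1| ≤ δ)
    (pmix : X → ℝ) (hpmix : ∀ x, pmix x = ∑ j, π j * p j x)
    (h : X → ℝ) (hh : ∀ x, h x = ∑ j, π j * p j x * ξ j x)
    (qs : X → ℝ) (hqs : ∀ x, 0 < qs x) (hqss : ∑ x, qs x = 1)
    (hmin : ∀ q : X → ℝ, (∀ x, 0 < q x) → (∑ x, q x = 1) →
      (∑ x, (pmix x * Real.log (h x / (h x + qs x)) +
        qs x * Real.log (qs x / (qs x + h x)))) ≤
      (∑ x, (pmix x * Real.log (h x / (h x + q x)) +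
        q x * Real.log (q x / (q x + h x))))) :
    (∀ x, |qs x / pmix x - 1| ≤ 16 * δ) ∧
    (1 / 2) * (∑ x, |qs x - pmix x|) ≤ 8 * δ := by
  classical
  have hKne : (univ : Finset (Fin K)).Nonempty :=
    nonempty_of_sum_ne_zero (by rw [hπs]; exact one_ne_zero)
  have hXne : (univ : Finset X).Nonempty :=
    nonempty_of_sum_ne_zero (by rw [hqss]; exact one_ne_zero)
  have hP : ∀ x, 0 < pmix x := fun x => by
    rw [hpmix]; exact sum_pos (fun j _ => mul_pos (hπ j) (hp j x)) hKne
  have hpsum : ∑ x, pmix x = 1 := by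
    simp_rw [hpmix]
    rw [sum_comm]
    simp [← mul_sum, hps, hπs]
  have hH : ∀ x, h x ∈ Set.Icc ((1 - δ) * pmix x) ((1 + δ) * pmix x) := fun x => by
    have := abs_sum_mul_sub_sum_le univ (fun j _ => (mul_pos (hπ j) (hp j x)).le)
      (fun j _ => hξ j x)
    rw [← hh x, ← hpmix x, abs_le] at this
    constructor <;> linarith [this.1, this.2]
  have hslope : ∀ x y, jsSlope (pmix x) (h x) (qs x) = jsSlope (pmix y) (h y) (qs y) :=
    eq_of_isMinOn_sum_of_hasDerivAt (f := fun x => jsTerm (pmix x) (h x)) hqs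
      (isMinOn_iff.2 fun q ⟨hq, hq1⟩ => hmin q hq (hq1.trans hqss))
      (fun x => hasDerivAt_jsTerm _ (by nlinarith [(hH x).1, hP x]) (hqs x))
  obtain ⟨xm, -, hxm⟩ := exists_le_of_sum_le hXne (hqss.trans hpsum.symm).le
  obtain ⟨xp, -, hxp⟩ := exists_le_of_sum_le hXne (hpsum.trans hqss.symm).le
  have hclose : ∀ x, |qs x - pmix x| ≤ 16 * δ * pmix x := fun x =>
    abs_sub_le_of_jsSlope_mem_Icc hδ0.le hδ (hP x) (hqs x) (hH x)
      ⟨(le_jsSlope_of_le hδ0.le (by linarith) (hP xp) (hH xp) hxp).trans_eq (hslope xp x),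
        (hslope x xm).trans_le (jsSlope_le_of_le hδ0.le (by linarith) (hqs xm) (hH xm) hxm)⟩
  refine ⟨fun x => ?_, ?_⟩
  · rw [div_sub_one (hP x).ne', abs_div, abs_of_pos (hP x), div_le_iff₀ (hP x)]
    exact hclose x
  · calc (1 / 2) * ∑ x, |qs x - pmix x| ≤ (1 / 2) * ∑ x, 16 * δ * pmix x := by
          gcongr with x; exact hclose x
      _ = 8 * δ := by rw [← mul_sum, hpsum]; ring

/-- Corollary 1 (Suboptimality Bound for UA-GAN): with `K ≥ 1` sites, positive
mixing weights `π` summing to `1`, local pmfs `p j`, perturbations `ξ j` with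
`|ξ j x − 1| ≤ δ ≤ 1/8`, target mixture `p x = ∑ j, π j * p j x`, and effective
density `h x = ∑ j, π j * p j x * ξ j x`, the minimizer `q*` of the perturbed
Jensen–Shannon loss satisfies `|q* x / p x − 1| ≤ 16δ` pointwise, and the total
variation distance is at most `8δ`. -/
theorem stmt_11 {X : Type*} [Fintype X] [Nonempty X]
    (K : ℕ) (hK : 1 ≤ K)
    (π : Fin K → ℝ) (hπ : ∀ j, 0 < π j) (hπs : ∑ j, π j = 1)
    (p : Fin K → X → ℝ) (hp : ∀ j x, 0 < p j x) (hps : ∀ j, ∑ x, p j x = 1)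
    (δ : ℝ) (hδ0 : 0 < δ) (hδ : δ ≤ 1 / 8)
    (ξ : Fin K → X → ℝ) (hξ : ∀ j x, |ξ j x - 1| ≤ δ)
    (pmix : X → ℝ) (hpmix : ∀ x, pmix x = ∑ j, π j * p j x)
    (h : X → ℝ) (hh : ∀ x, h x = ∑ j, π j * p j x * ξ j x)
    (qs : X → ℝ) (hqs : ∀ x, 0 < qs x) (hqss : ∑ x, qs x = 1)
    (hmin : ∀ q : X → ℝ, (∀ x, 0 < q x) → (∑ x, q x = 1) →
      (∑ x, (pmix x * Real.log (h x / (h x + qs x)) +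
        qs x * Real.log (qs x / (qs x + h x)))) ≤
      (∑ x, (pmix x * Real.log (h x / (h x + q x)) +
        q x * Real.log (q x / (q x + h x))))) :
    (∀ x, |qs x / pmix x - 1| ≤ 16 * δ) ∧
    (1 / 2) * (∑ x, |qs x - pmix x|) ≤ 8 * δ :=
  stmt_11_general K π hπ hπs p hp hps δ hδ0 hδ ξ hξ pmix hpmix h hh qs hqs hqss hmin
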